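/- arXiv:1701.06365 — 4 statements merged into one kernel-verified Lean document; each statement's English description precedes it below -/
import Mathlib

section
/- Let Γ be a computable amenable group. Then there exists a canonically computable, tempered, two-sided Følner sequence (F_n)_{n≥1} in Γ. -/
/-!
Namioka's trick produces sets that are almost invariant on both sides: if `A` is almost
left-invariant and `B` almost right-invariant, then, by the layer-cake formula and pigeonhole,
some superlevel set `{x | t < (1_A * 1_B)(x)}` of the convolution is almost invariant on both
sides. Almost-invariance of a finite set is decidable once multiplication is computable, so an
unbounded search over codes of lists finds at stage `n` a set `F n` which is `(n + 1)`-invariant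
under the elements of code `≤ n` and `|E|`-invariant under every element of
`E = F 0 ∪ ⋯ ∪ F (n - 1)`. The latter forces `|E⁻¹ * F n| ≤ 2 |F n|`, so the sequence is
`2`-tempered.
-/

open Pointwise Filter

/-- A left Følner sequence: a sequence of nonempty finite subsets `F n` of `Γ` such that
`|F n ∆ g • F n| / |F n| → 0` for every `g ∈ Γ`. -/
def IsLeftFolner {Γ : Type*} [Group Γ] [DecidableEq Γ] (F : ℕ → Finset Γ) : Prop :=
  (∀ n, (F n).Nonempty) ∧
    ∀ g : Γ, Tendsto (fun n => ((symmDiff (F n) ((F n).image (g * ·))).card : ℝ) / (F n).card)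
      atTop (nhds 0)

/-- A right Følner sequence: a sequence of nonempty finite subsets `F n` of `Γ` such that
`|F n ∆ (F n)g| / |F n| → 0` for every `g ∈ Γ`. -/
def IsRightFolner {Γ : Type*} [Group Γ] [DecidableEq Γ] (F : ℕ → Finset Γ) : Prop :=
  (∀ n, (F n).Nonempty) ∧
    ∀ g : Γ, Tendsto (fun n => ((symmDiff (F n) ((F n).image (· * g))).card : ℝ) / (F n).card)
      atTop (nhds 0)

/-- A sequence of finite subsets of `Γ` is `C`-tempered if
`|⋃_{i<j} (F i)⁻¹ * F j| ≤ C * |F j|` for every `j`. -/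
def IsTempered {Γ : Type*} [Group Γ] [DecidableEq Γ] (C : ℝ) (F : ℕ → Finset Γ) : Prop :=
  ∀ j, ((((Finset.range j).biUnion fun i => (F i)⁻¹ * F j)).card : ℝ) ≤ C * (F j).card

/-- A sequence of finite subsets of `Γ` is canonically computable if the function
`n ↦ F n` is computable (we represent each finite set by a list enumerating it). -/
def CanonicallyComputable {Γ : Type*} [Primcodable Γ] [DecidableEq Γ]
    (F : ℕ → Finset Γ) : Prop :=
  ∃ L : ℕ → List Γ, Computable L ∧ ∀ n, (L n).toFinset = F n

open Finset
open scoped symmDiff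

theorem Finset.card_symmDiff_eq_add {α : Type*} [DecidableEq α] (s t : Finset α) :
    #(s ∆ t) = #(s \ t) + #(t \ s) := by
  rw [symmDiff_def]
  exact card_union_of_disjoint disjoint_sdiff_sdiff

theorem Finset.card_symmDiff_eq_two_mul_card_union {α : Type*} [DecidableEq α] (s t : Finset α) :
    #(s ∆ t) = 2 * #(s ∪ t) - #s - #t := by
  have := card_union_add_card_inter s t
  have := card_sdiff_add_card_inter s t
  have := card_sdiff_add_card_inter t s
  rw [inter_comm] at this
  rw [card_symmDiff_eq_add]
  omega

section LayerCake
variable {α : Type*} [DecidableEq α]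

theorem sum_card_filter_lt_sdiff (U : Finset α) (f g : α → ℕ) {T : ℕ}
    (hf : ∀ x ∈ U, f x ≤ T) :
    ∑ t ∈ range T, #({x ∈ U | t < f x} \ {x ∈ U | t < g x}) = ∑ x ∈ U, (f x - g x) := by
  have hlevel : ∀ t,
      {x ∈ U | t < f x} \ {x ∈ U | t < g x} = {x ∈ U | g x ≤ t ∧ t < f x} := by
    intro t; ext x; simp only [mem_filter]; grind
  simp_rw [hlevel, card_filter]
  rw [sum_comm]
  refine sum_congr rfl fun x hx => ?_
  rw [← card_filter, ← Nat.card_Ico]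
  congr 1
  ext t
  have := hf x hx
  simp only [mem_filter, mem_range, mem_Ico]
  omega

theorem sum_card_symmDiff_filter_lt (U : Finset α) {f g : α → ℕ} {T : ℕ}
    (hf : ∀ x ∈ U, f x ≤ T) (hg : ∀ x ∈ U, g x ≤ T) :
    ∑ t ∈ range T, #({x ∈ U | t < f x} ∆ {x ∈ U | t < g x}) =
      ∑ x ∈ U, ((f x - g x) + (g x - f x)) := by
  simp_rw [card_symmDiff_eq_add, sum_add_distrib, sum_card_filter_lt_sdiff U f g hf,
    sum_card_filter_lt_sdiff U g f hg]

end LayerCake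

section Convolution
variable {Γ : Type*} [Group Γ] [DecidableEq Γ]

/-- The convolution `1_A * 1_B`. -/
def mulCount (A B : Finset Γ) (x : Γ) : ℕ := #{p ∈ A ×ˢ B | p.1 * p.2 = x}

theorem mulCount_le (A B : Finset Γ) (x : Γ) : mulCount A B x ≤ #A * #B :=
  (card_filter_le _ _).trans (card_product A B).le

theorem mem_mul_of_mulCount_pos {A B : Finset Γ} {x : Γ} (h : 0 < mulCount A B x) :
    x ∈ A * B := by
  obtain ⟨⟨a, b⟩, hab⟩ := card_pos.1 h
  simp only [mem_filter, mem_product] at hab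
  exact hab.2 ▸ mul_mem_mul hab.1.1 hab.1.2

theorem sum_mulCount {A B U : Finset Γ} (hU : A * B ⊆ U) :
    ∑ x ∈ U, mulCount A B x = #A * #B := by
  rw [← card_product]
  exact (card_eq_sum_card_fiberwise fun p hp =>
    hU (mul_mem_mul (mem_product.1 hp).1 (mem_product.1 hp).2)).symm

theorem mulCount_image_mul_left (g : Γ) (A B : Finset Γ) (x : Γ) :
    mulCount (A.image (g * ·)) B x = mulCount A B (g⁻¹ * x) := by
  refine card_nbij' (fun p => (g⁻¹ * p.1, p.2)) (fun p => (g * p.1, p.2)) ?_ ?_ ?_ ?_ <;>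
    intro p <;> simp [mul_assoc, eq_inv_mul_iff_mul_eq]

theorem mulCount_image_mul_right (g : Γ) (A B : Finset Γ) (x : Γ) :
    mulCount A (B.image (· * g)) x = mulCount A B (x * g⁻¹) := by
  refine card_nbij' (fun p => (p.1, p.2 * g⁻¹)) (fun p => (p.1, p.2 * g)) ?_ ?_ ?_ ?_ <;>
    intro p <;> simp [← mul_assoc, eq_mul_inv_iff_mul_eq]

theorem mulCount_sub_mulCount_le_left (A A' B : Finset Γ) (x : Γ) :
    mulCount A B x - mulCount A' B x ≤ mulCount (A \ A') B x :=
  (le_card_sdiff _ _).trans <| card_le_card fun p => by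
    simp only [Finset.mem_sdiff, mem_filter, mem_product, not_and, and_imp]; tauto

theorem mulCount_sub_mulCount_le_right (A B B' : Finset Γ) (x : Γ) :
    mulCount A B x - mulCount A B' x ≤ mulCount A (B \ B') x :=
  (le_card_sdiff _ _).trans <| card_le_card fun p => by
    simp only [Finset.mem_sdiff, mem_filter, mem_product, not_and, and_imp]; tauto

end Convolution

section LevelSets
variable {Γ : Type*} [Group Γ] [DecidableEq Γ] {A A' B B' : Finset Γ} {t T : ℕ}

def levelSet (A B : Finset Γ) (t : ℕ) : Finset Γ := {x ∈ A * B | t < mulCount A B x}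

theorem mem_levelSet {x : Γ} : x ∈ levelSet A B t ↔ t < mulCount A B x :=
  ⟨fun h => (mem_filter.1 h).2,
    fun h => mem_filter.2 ⟨mem_mul_of_mulCount_pos (Nat.zero_lt_of_lt h), h⟩⟩

theorem levelSet_eq_filter {U : Finset Γ} (hU : A * B ⊆ U) :
    levelSet A B t = {x ∈ U | t < mulCount A B x} := by
  ext x
  rw [mem_levelSet, mem_filter]
  exact ⟨fun h => ⟨hU (mem_mul_of_mulCount_pos (Nat.zero_lt_of_lt h)), h⟩, And.right⟩

theorem image_mul_left_levelSet (g : Γ) :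
    (levelSet A B t).image (g * ·) = levelSet (A.image (g * ·)) B t := by
  ext x
  rw [image_mul_left, mem_preimage, mem_levelSet, mem_levelSet, mulCount_image_mul_left]

theorem image_mul_right_levelSet (g : Γ) :
    (levelSet A B t).image (· * g) = levelSet A (B.image (· * g)) t := by
  ext x
  rw [image_mul_right, mem_preimage, mem_levelSet, mem_levelSet, mulCount_image_mul_right]

theorem sum_card_levelSet (hT : #A * #B ≤ T) :
    ∑ t ∈ range T, #(levelSet A B t) = #A * #B := by
  have := sum_card_filter_lt_sdiff (A * B) (mulCount A B) (fun _ => 0)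
    fun x _ => (mulCount_le A B x).trans hT
  simpa [levelSet, sum_mulCount subset_rfl] using this

theorem sum_card_symmDiff_levelSet_left_le (hA : #A * #B ≤ T) (hA' : #A' * #B ≤ T) :
    ∑ t ∈ range T, #(levelSet A B t ∆ levelSet A' B t) ≤ #(A ∆ A') * #B := by
  have hU : A * B ⊆ A * B ∪ A' * B := subset_union_left
  have hU' : A' * B ⊆ A * B ∪ A' * B := subset_union_right
  simp_rw [levelSet_eq_filter hU, levelSet_eq_filter hU']
  rw [sum_card_symmDiff_filter_lt _ (fun x _ => (mulCount_le A B x).trans hA)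
    (fun x _ => (mulCount_le A' B x).trans hA')]
  calc _ ≤ ∑ x ∈ A * B ∪ A' * B, (mulCount (A \ A') B x + mulCount (A' \ A) B x) :=
        sum_le_sum fun x _ => add_le_add (mulCount_sub_mulCount_le_left A A' B x)
          (mulCount_sub_mulCount_le_left A' A B x)
    _ = #(A ∆ A') * #B := by
        rw [sum_add_distrib, sum_mulCount ((mul_subset_mul_right sdiff_subset).trans hU),
          sum_mulCount ((mul_subset_mul_right sdiff_subset).trans hU'), card_symmDiff_eq_add,
          add_mul]

theorem sum_card_symmDiff_levelSet_right_le (hB : #A * #B ≤ T) (hB' : #A * #B' ≤ T) :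
    ∑ t ∈ range T, #(levelSet A B t ∆ levelSet A B' t) ≤ #A * #(B ∆ B') := by
  have hU : A * B ⊆ A * B ∪ A * B' := subset_union_left
  have hU' : A * B' ⊆ A * B ∪ A * B' := subset_union_right
  simp_rw [levelSet_eq_filter hU, levelSet_eq_filter hU']
  rw [sum_card_symmDiff_filter_lt _ (fun x _ => (mulCount_le A B x).trans hB)
    (fun x _ => (mulCount_le A B' x).trans hB')]
  calc _ ≤ ∑ x ∈ A * B ∪ A * B', (mulCount A (B \ B') x + mulCount A (B' \ B) x) :=
        sum_le_sum fun x _ => add_le_add (mulCount_sub_mulCount_le_right A B B' x)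
          (mulCount_sub_mulCount_le_right A B' B x)
    _ = #A * #(B ∆ B') := by
        rw [sum_add_distrib, sum_mulCount ((mul_subset_mul_left sdiff_subset).trans hU),
          sum_mulCount ((mul_subset_mul_left sdiff_subset).trans hU'), card_symmDiff_eq_add,
          mul_add]

theorem sum_card_symmDiff_image_mul_left_levelSet_le (g : Γ) :
    ∑ t ∈ range (#A * #B), #(levelSet A B t ∆ (levelSet A B t).image (g * ·)) ≤
      #(A ∆ A.image (g * ·)) * #B := by
  simp_rw [image_mul_left_levelSet]
  exact sum_card_symmDiff_levelSet_left_le le_rfl (Nat.mul_le_mul_right _ card_image_le)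

theorem sum_card_symmDiff_image_mul_right_levelSet_le (g : Γ) :
    ∑ t ∈ range (#A * #B), #(levelSet A B t ∆ (levelSet A B t).image (· * g)) ≤
      #A * #(B ∆ B.image (· * g)) := by
  simp_rw [image_mul_right_levelSet]
  exact sum_card_symmDiff_levelSet_right_le le_rfl (Nat.mul_le_mul_left _ card_image_le)

end LevelSets

section Invariance
variable {Γ : Type*} [Group Γ] [DecidableEq Γ]

def IsLeftInvariant (m : ℕ) (K A : Finset Γ) : Prop :=
  ∀ g ∈ K, m * #(A ∆ A.image (g * ·)) ≤ #A

def IsRightInvariant (m : ℕ) (K A : Finset Γ) : Prop :=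
  ∀ g ∈ K, m * #(A ∆ A.image (· * g)) ≤ #A

theorem IsLeftInvariant.inv {m : ℕ} {K C : Finset Γ} (h : IsLeftInvariant m K⁻¹ C) :
    IsRightInvariant m K C⁻¹ := by
  intro g hg
  have hsymm : C⁻¹ ∆ C⁻¹.image (· * g) = (C ∆ C.image (g⁻¹ * ·))⁻¹ := by
    ext x
    simp [mem_symmDiff]
  rw [hsymm, card_inv, card_inv]
  exact h g⁻¹ (inv_mem_inv hg)

def invarianceDefect (K L : Finset Γ) : ℕ :=
  ∑ g ∈ K, (#(L ∆ L.image (g * ·)) + #(L ∆ L.image (· * g)))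

theorem isLeftInvariant_isRightInvariant_of_mul_invarianceDefect_le {m : ℕ} {K L : Finset Γ}
    (h : m * invarianceDefect K L ≤ #L) : IsLeftInvariant m K L ∧ IsRightInvariant m K L := by
  have hle : ∀ g ∈ K,
      #(L ∆ L.image (g * ·)) + #(L ∆ L.image (· * g)) ≤ invarianceDefect K L :=
    fun g hg => single_le_sum (f := fun g => #(L ∆ L.image (g * ·)) + #(L ∆ L.image (· * g)))
      (fun _ _ => Nat.zero_le _) hg
  exact ⟨fun g hg => (Nat.mul_le_mul_left m (le_self_add.trans (hle g hg))).trans h,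
    fun g hg => (Nat.mul_le_mul_left m (le_add_self.trans (hle g hg))).trans h⟩

theorem sum_invarianceDefect_levelSet_le (K A B : Finset Γ) :
    ∑ t ∈ range (#A * #B), invarianceDefect K (levelSet A B t) ≤
      ∑ g ∈ K, (#(A ∆ A.image (g * ·)) * #B + #A * #(B ∆ B.image (· * g))) := by
  simp only [invarianceDefect]
  rw [sum_comm]
  gcongr with g
  rw [sum_add_distrib]
  exact add_le_add (sum_card_symmDiff_image_mul_left_levelSet_le g)
    (sum_card_symmDiff_image_mul_right_levelSet_le g)

theorem exists_levelSet_isLeftInvariant_isRightInvariant {m : ℕ} {K A B : Finset Γ}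
    (hA : A.Nonempty) (hB : B.Nonempty) (hAK : IsLeftInvariant (2 * m * #K + 1) K A)
    (hBK : IsRightInvariant (2 * m * #K + 1) K B) :
    ∃ t, (levelSet A B t).Nonempty ∧ IsLeftInvariant m K (levelSet A B t) ∧
      IsRightInvariant m K (levelSet A B t) := by
  set M := 2 * m * #K + 1
  set D := ∑ t ∈ range (#A * #B), invarianceDefect K (levelSet A B t)
  have hD : M * D ≤ 2 * #K * (#A * #B) := by
    calc M * D
        ≤ ∑ g ∈ K, M * (#(A ∆ A.image (g * ·)) * #B + #A * #(B ∆ B.image (· * g))) :=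
          (Nat.mul_le_mul_left M (sum_invarianceDefect_levelSet_le K A B)).trans_eq (mul_sum _ _ _)
      _ ≤ ∑ g ∈ K, 2 * (#A * #B) := sum_le_sum fun g hg => by nlinarith [hAK g hg, hBK g hg]
      _ = 2 * #K * (#A * #B) := by rw [sum_const, smul_eq_mul]; ring
  have hlt : ∑ t ∈ range (#A * #B), m * invarianceDefect K (levelSet A B t) <
      ∑ t ∈ range (#A * #B), #(levelSet A B t) := by
    rw [← mul_sum, sum_card_levelSet le_rfl]
    have hP : 0 < #A * #B := Nat.mul_pos hA.card_pos hB.card_pos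
    refine Nat.lt_of_mul_lt_mul_left (a := M) ?_
    calc M * (m * D) = m * (M * D) := Nat.mul_left_comm _ _ _
      _ ≤ m * (2 * #K * (#A * #B)) := Nat.mul_le_mul_left m hD
      _ < M * (#A * #B) := by simp only [M]; nlinarith
  obtain ⟨t, -, ht⟩ := exists_lt_of_sum_lt hlt
  exact ⟨t, card_pos.1 (Nat.zero_lt_of_lt ht),
    isLeftInvariant_isRightInvariant_of_mul_invarianceDefect_le ht.le⟩

theorem exists_isLeftInvariant_isRightInvariant
    (h : ∀ (K : Finset Γ) (m : ℕ), ∃ A : Finset Γ, A.Nonempty ∧ IsLeftInvariant m K A)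
    (K : Finset Γ) (m : ℕ) :
    ∃ F : Finset Γ, F.Nonempty ∧ IsLeftInvariant m K F ∧ IsRightInvariant m K F := by
  obtain ⟨A, hA, hAK⟩ := h K (2 * m * #K + 1)
  obtain ⟨C, hC, hCK⟩ := h K⁻¹ (2 * m * #K + 1)
  obtain ⟨t, ht⟩ := exists_levelSet_isLeftInvariant_isRightInvariant hA hC.inv hAK hCK.inv
  exact ⟨_, ht⟩

end Invariance

theorem tendsto_div_of_succ_mul_le {c d : ℕ → ℕ} (hc : ∀ n, 0 < c n)
    (h : ∀ᶠ n in atTop, (n + 1) * d n ≤ c n) :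
    Tendsto (fun n => (d n : ℝ) / c n) atTop (nhds 0) := by
  refine tendsto_of_tendsto_of_tendsto_of_le_of_le' tendsto_const_nhds
    tendsto_one_div_add_atTop_nhds_zero_nat (Eventually.of_forall fun n => by positivity) ?_
  refine h.mono fun n hn => ?_
  rw [div_le_div_iff₀ (by exact_mod_cast hc n) (by positivity), one_mul]
  exact_mod_cast (by linarith [hn] : d n * (n + 1) ≤ c n)

section FolnerSequences
variable {Γ : Type*} [Group Γ] [DecidableEq Γ]

theorem IsLeftFolner.exists_isLeftInvariant {F : ℕ → Finset Γ} (hF : IsLeftFolner F)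
    (K : Finset Γ) (m : ℕ) : ∃ A : Finset Γ, A.Nonempty ∧ IsLeftInvariant m K A := by
  have hsmall : ∀ᶠ n in atTop, ∀ g ∈ K,
      (m : ℝ) * (#(F n ∆ (F n).image (g * ·)) / #(F n)) ≤ 1 := by
    rw [eventually_all_finset]
    intro g _
    have := (hF.2 g).const_mul (m : ℝ)
    rw [mul_zero] at this
    exact this.eventually (ge_mem_nhds zero_lt_one)
  obtain ⟨n, hn⟩ := hsmall.exists
  refine ⟨F n, hF.1 n, fun g hg => ?_⟩
  have := hn g hg
  rw [← mul_div_assoc, div_le_one (by exact_mod_cast (hF.1 n).card_pos)] at this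
  exact_mod_cast this

theorem card_image_inv_mul_sdiff_le (F : Finset Γ) (y : Γ) :
    #(F.image (y⁻¹ * ·) \ F) ≤ #(F ∆ F.image (y * ·)) :=
  calc #(F.image (y⁻¹ * ·) \ F) = #((F.image (y⁻¹ * ·) \ F).image (y * ·)) :=
        (card_image_of_injective _ (mul_right_injective y)).symm
    _ ≤ #(F ∆ F.image (y * ·)) := card_le_card fun x => by
        simp only [mem_image, Finset.mem_sdiff, mem_symmDiff]
        rintro ⟨_, ⟨⟨w, hw, rfl⟩, hn⟩, rfl⟩
        exact Or.inl ⟨by simpa using hw, fun ⟨v, hv, he⟩ => hn (mul_left_cancel he ▸ hv)⟩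

theorem card_inv_mul_le_two_mul {E F : Finset Γ}
    (h : ∀ y ∈ E, #E * #(F ∆ F.image (y * ·)) ≤ #F) : #(E⁻¹ * F) ≤ 2 * #F := by
  have hsub : E⁻¹ * F ⊆ F ∪ E.biUnion fun y => F.image (y⁻¹ * ·) \ F := by
    intro z hz
    obtain ⟨x, hx, w, hw, rfl⟩ := mem_mul.1 hz
    by_cases hmem : x * w ∈ F
    · exact mem_union_left _ hmem
    · refine mem_union_right _
        (mem_biUnion.2 ⟨x⁻¹, Finset.mem_inv'.1 hx, Finset.mem_sdiff.2 ⟨?_, hmem⟩⟩)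
      simpa using mem_image_of_mem (x * ·) hw
  have hsum : ∑ y ∈ E, #(F ∆ F.image (y * ·)) ≤ #F := by
    rcases E.eq_empty_or_nonempty with rfl | hE
    · simp
    · refine le_of_mul_le_mul_left ?_ hE.card_pos
      rw [mul_sum]
      calc ∑ y ∈ E, #E * #(F ∆ F.image (y * ·)) ≤ ∑ y ∈ E, #F := sum_le_sum h
        _ = #E * #F := by rw [sum_const, smul_eq_mul]
  calc #(E⁻¹ * F) ≤ #F + ∑ y ∈ E, #(F.image (y⁻¹ * ·) \ F) :=
        (card_le_card hsub).trans <| (card_union_le _ _).trans <| add_le_add le_rfl card_biUnion_le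
    _ ≤ #F + #F :=
        add_le_add le_rfl ((sum_le_sum fun y _ => card_image_inv_mul_sdiff_le F y).trans hsum)
    _ = 2 * #F := (two_mul _).symm

theorem isTempered_two {F : ℕ → Finset Γ}
    (h : ∀ j, ∀ y ∈ (range j).biUnion F,
      #((range j).biUnion F) * #(F j ∆ (F j).image (y * ·)) ≤ #(F j)) :
    IsTempered 2 F := by
  intro j
  have hsub : (range j).biUnion (fun i => (F i)⁻¹ * F j) ⊆ ((range j).biUnion F)⁻¹ * F j :=
    biUnion_subset.2 fun i hi => mul_subset_mul_right (inv_subset_inv (subset_biUnion_of_mem F hi))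
  exact_mod_cast (card_le_card hsub).trans (card_inv_mul_le_two_mul (h j))

end FolnerSequences

section Computability
variable {α β σ : Type*} [Primcodable α] [Primcodable β] [Primcodable σ]

theorem Computable.list_map {f : α → List β} {g : α → β → σ} (hf : Computable f)
    (hg : Computable₂ g) : Computable fun a => (f a).map (g a) := by
  have hstep : Computable₂ fun a (p : ℕ × List σ) =>
      Option.casesOn (motive := fun _ => List σ) (f a)[p.1]? p.2 fun b => p.2 ++ [g a b] :=
    Computable.option_casesOn (Computable.list_getElem?.comp (hf.comp fst) (fst.comp snd))
      (snd.comp snd)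
      (Computable.list_concat.comp (snd.comp (snd.comp fst)) (hg.comp (fst.comp fst) snd))
  refine (Computable.nat_rec (Computable.list_length.comp hf) (Computable.const []) hstep).of_eq
    fun a => ?_
  suffices ∀ n, Nat.rec (motive := fun _ => List σ) [] (fun n acc =>
      Option.casesOn (motive := fun _ => List σ) (f a)[n]? acc fun b => acc ++ [g a b]) n =
      ((f a).take n).map (g a) by
    rw [this, List.take_length]
  intro n
  induction n with
  | zero => simp
  | succ n ih => cases h : (f a)[n]? <;> simp [List.take_add_one, h, ih]

theorem Computable.list_all {f : α → List β} {p : α → β → Bool} (hf : Computable f)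
    (hp : Computable₂ p) : Computable fun a => (f a).all (p a) := by
  have hall : Primrec fun L : List Bool => L.all id :=
    (PrimrecPred.forall_mem_list (Primrec.eq.comp Primrec.id (Primrec.const true))).decide.of_eq
      fun L => Bool.eq_iff_iff.2 (by simp [List.all_eq_true])
  exact (hall.to_comp.comp (Computable.list_map hf hp)).of_eq fun a => by simp [List.all_map]

theorem Primrec.list_insert [DecidableEq α] :
    Primrec₂ (List.insert : α → List α → List α) := by
  have hmem : PrimrecPred fun p : α × List α => p.1 ∈ p.2 :=
    PrimrecPred.of_eq (p := fun p : α × List α => p.2.idxOf p.1 < p.2.length)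
      (Primrec.nat_lt.comp (Primrec.list_idxOf.comp fst snd) (Primrec.list_length.comp snd))
      fun _ => List.idxOf_lt_length_iff
  exact (Primrec.ite hmem snd (Primrec.list_cons.comp fst snd)).of_eq fun p => by
    by_cases h : p.1 ∈ p.2 <;> simp [h]

theorem Primrec.card_list_toFinset [DecidableEq α] : Primrec fun l : List α => #l.toFinset := by
  -- `l ∪ []` is `l` without duplicates
  have hunion : Primrec fun l : List α => l ∪ [] :=
    (Primrec.list_foldr Primrec.id (Primrec.const [])
      (Primrec.list_insert.comp (fst.comp snd) (snd.comp snd)).to₂).of_eq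
      fun l => (List.union_def l []).symm
  refine (Primrec.list_length.comp hunion).of_eq fun l => ?_
  rw [← List.toFinset_card_of_nodup (List.Nodup.union l List.nodup_nil)]
  congr 1
  ext x
  simp

theorem Primrec.card_symmDiff_list_toFinset [DecidableEq α] :
    Primrec₂ fun l u : List α => #(l.toFinset ∆ u.toFinset) := by
  have hcard := Primrec.card_list_toFinset (α := α)
  refine (Primrec.nat_sub.comp (Primrec.nat_sub.comp (Primrec.nat_mul.comp (Primrec.const 2)
    (hcard.comp (Primrec.list_append.comp fst snd))) (hcard.comp fst)) (hcard.comp snd)).of_eq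
    fun p => by dsimp only; rw [card_symmDiff_eq_two_mul_card_union, List.toFinset_append]

theorem exists_computable_of_forall_exists {ok : α → β → Bool} (hok : Computable₂ ok)
    (h : ∀ a, ∃ b, ok a b = true) :
    ∃ f : α → β, Computable f ∧ ∀ a, ok a (f a) = true := by
  let search : α →. β := fun a => Nat.rfindOpt fun n =>
    (Encodable.decode (α := β) n).bind fun b => bif ok a b then some b else none
  have hsearch : Partrec search :=
    Partrec.rfindOpt <| Computable.option_bind (Computable.decode.comp Computable.snd) <|
      Computable.cond (hok.comp (Computable.fst.comp Computable.fst) Computable.snd)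
        (Computable.option_some.comp Computable.snd) (Computable.const none)
  have hdom : ∀ a, (search a).Dom := fun a => by
    obtain ⟨b, hb⟩ := h a
    exact Nat.rfindOpt_dom.2 ⟨Encodable.encode b, b, by simp [hb]⟩
  refine ⟨fun a => (search a).get (hdom a),
    hsearch.of_eq_tot fun a => Part.get_mem (hdom a), fun a => ?_⟩
  obtain ⟨n, hn⟩ := Nat.rfindOpt_spec (Part.get_mem (hdom a))
  obtain ⟨b, -, hb⟩ := Option.bind_eq_some_iff.1 hn
  cases hab : ok a b <;>
    simp only [hab, cond_true, cond_false, reduceCtorEq, Option.some.injEq] at hb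
  subst hb
  exact hab

theorem exists_computable_eq_step_map_range {step : List β → β} (hstep : Computable step) :
    ∃ L : ℕ → β, Computable L ∧ ∀ n, L n = step ((List.range n).map L) := by
  let hist : ℕ → List β := fun n => Nat.rec [] (fun _ H => H ++ [step H]) n
  have hhist : Computable hist :=
    (Computable.nat_rec (f := id) (g := fun _ => []) (h := fun _ p => p.2 ++ [step p.2])
      Computable.id (Computable.const [])
      (Computable.list_concat.comp (Computable.snd.comp Computable.snd)
        (hstep.comp (Computable.snd.comp Computable.snd)))).of_eq fun _ => rfl
  refine ⟨fun n => step (hist n), hstep.comp hhist, fun n => congrArg step ?_⟩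
  induction n with
  | zero => rfl
  | succ n ih => simp only [hist, List.range_succ, List.map_append, ← ih]; rfl

end Computability

section Stages
variable {Γ : Type*} [Group Γ] [DecidableEq Γ] [Primcodable Γ]

/-- At stage `n = hist.length` the new set has to be `stageBound hist`-invariant under the
elements of code `≤ n`, which makes the sequence Følner, and under the elements of the earlier
sets, which makes it tempered. -/
def stageElems (hist : List (List Γ)) : List Γ :=
  (List.range (hist.length + 1)).filterMap Encodable.decode ++ hist.flatten

def stageBound (hist : List (List Γ)) : ℕ := hist.length + 1 + hist.flatten.length

def invarianceTest (m : ℕ) (l u : List Γ) : Bool :=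
  decide (m * #(l.toFinset ∆ u.toFinset) ≤ #l.toFinset)

def stageCheck (hist : List (List Γ)) (l : List Γ) : Bool :=
  decide (l ≠ []) && (stageElems hist).all fun g =>
    invarianceTest (stageBound hist) l (l.map (g * ·)) &&
      invarianceTest (stageBound hist) l (l.map (· * g))

theorem stageCheck_eq_true_iff {hist : List (List Γ)} {l : List Γ} :
    stageCheck hist l = true ↔ l ≠ [] ∧
      IsLeftInvariant (stageBound hist) (stageElems hist).toFinset l.toFinset ∧
      IsRightInvariant (stageBound hist) (stageElems hist).toFinset l.toFinset := by
  have hmap : ∀ f : Γ → Γ, (l.map f).toFinset = l.toFinset.image f := fun f => by ext; simp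
  simp only [stageCheck, invarianceTest, IsLeftInvariant, IsRightInvariant, hmap,
    List.mem_toFinset, Bool.and_eq_true, decide_eq_true_eq, List.all_eq_true]
  exact ⟨fun ⟨hl, h⟩ => ⟨hl, fun g hg => (h g hg).1, fun g hg => (h g hg).2⟩,
    fun ⟨hl, hL, hR⟩ => ⟨hl, fun g hg => ⟨hL g hg, hR g hg⟩⟩⟩

omit [Group Γ] in
theorem primrec_invarianceTest :
    Primrec fun p : ℕ × List Γ × List Γ => invarianceTest p.1 p.2.1 p.2.2 :=
  Primrec.nat_le.decide.comp
    (Primrec.nat_mul.comp Primrec.fst (Primrec.card_symmDiff_list_toFinset.comp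
      (Primrec.fst.comp Primrec.snd) (Primrec.snd.comp Primrec.snd)))
    (Primrec.card_list_toFinset.comp (Primrec.fst.comp Primrec.snd))

omit [Group Γ] [DecidableEq Γ] in
theorem primrec_stageElems : Primrec (stageElems (Γ := Γ)) :=
  Primrec.list_append.comp
    (Primrec.listFilterMap (Primrec.list_range.comp (Primrec.succ.comp Primrec.list_length))
      (Primrec.decode.comp Primrec.snd).to₂)
    Primrec.list_flatten

omit [Group Γ] [DecidableEq Γ] in
theorem primrec_stageBound : Primrec (stageBound (Γ := Γ)) :=
  Primrec.nat_add.comp (Primrec.succ.comp Primrec.list_length)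
    (Primrec.list_length.comp Primrec.list_flatten)

theorem computable_stageCheck (hmul : Computable₂ fun a b : Γ => a * b) :
    Computable₂ (stageCheck (Γ := Γ)) := by
  have htest : ∀ {f : (List (List Γ) × List Γ) × Γ → Γ → Γ}, Computable₂ f →
      Computable fun p : (List (List Γ) × List Γ) × Γ =>
        invarianceTest (stageBound p.1.1) p.1.2 (p.1.2.map (f p)) := fun {f} hf => by
    have hl : Computable fun p : (List (List Γ) × List Γ) × Γ => p.1.2 :=
      Computable.snd.comp Computable.fst
    have hargs : Computable fun p : (List (List Γ) × List Γ) × Γ =>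
        (stageBound p.1.1, p.1.2, p.1.2.map (f p)) :=
      (primrec_stageBound.to_comp.comp (Computable.fst.comp Computable.fst)).pair
        (hl.pair (Computable.list_map hl hf))
    exact (primrec_invarianceTest.to_comp.comp hargs :)
  have hleft := htest (f := fun p b => p.2 * b)
    (hmul.comp (Computable.snd.comp Computable.fst) Computable.snd)
  have hright := htest (f := fun p b => b * p.2)
    (hmul.comp Computable.snd (Computable.snd.comp Computable.fst))
  have hne : Computable fun x : List (List Γ) × List Γ => decide (x.2 ≠ []) :=
    (Primrec.eq.comp Primrec.snd (Primrec.const [])).not.decide.to_comp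
  have hboth : Computable₂ fun (x : List (List Γ) × List Γ) (g : Γ) =>
      invarianceTest (stageBound x.1) x.2 (x.2.map (g * ·)) &&
        invarianceTest (stageBound x.1) x.2 (x.2.map (· * g)) :=
    Primrec.and.to_comp.comp hleft hright
  exact Primrec.and.to_comp.comp hne <|
    Computable.list_all (primrec_stageElems.to_comp.comp Computable.fst) hboth

theorem exists_stageCheck
    (h : ∀ (K : Finset Γ) (m : ℕ),
      ∃ F : Finset Γ, F.Nonempty ∧ IsLeftInvariant m K F ∧ IsRightInvariant m K F)
    (hist : List (List Γ)) : ∃ l, stageCheck hist l = true := by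
  obtain ⟨F, hF, hL, hR⟩ := h (stageElems hist).toFinset (stageBound hist)
  refine ⟨F.toList, stageCheck_eq_true_iff.2 ?_⟩
  rw [toList_toFinset]
  exact ⟨fun hnil => hF.ne_empty (toList_eq_nil.1 hnil), hL, hR⟩

theorem exists_computable_stageCheck (hmul : Computable₂ fun a b : Γ => a * b)
    (h : ∀ (K : Finset Γ) (m : ℕ),
      ∃ F : Finset Γ, F.Nonempty ∧ IsLeftInvariant m K F ∧ IsRightInvariant m K F) :
    ∃ L : ℕ → List Γ, Computable L ∧
      ∀ n, stageCheck ((List.range n).map L) (L n) = true := by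
  obtain ⟨step, hstep, hok⟩ :=
    exists_computable_of_forall_exists (computable_stageCheck hmul) (exists_stageCheck h)
  obtain ⟨L, hL, hLeq⟩ := exists_computable_eq_step_map_range hstep
  exact ⟨L, hL, fun n => by rw [hLeq n]; exact hok _⟩

theorem succ_mul_card_symmDiff_le_of_stageCheck {hist : List (List Γ)} {l : List Γ}
    (h : stageCheck hist l = true) {g : Γ} (hg : Encodable.encode g ≤ hist.length) :
    (hist.length + 1) * #(l.toFinset ∆ l.toFinset.image (g * ·)) ≤ #l.toFinset ∧
      (hist.length + 1) * #(l.toFinset ∆ l.toFinset.image (· * g)) ≤ #l.toFinset := by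
  obtain ⟨-, hL, hR⟩ := stageCheck_eq_true_iff.1 h
  have hmem : g ∈ (stageElems hist).toFinset := by
    simpa [stageElems] using Or.inl ⟨Encodable.encode g, by omega, Encodable.encodek g⟩
  have hN : hist.length + 1 ≤ stageBound hist := Nat.le_add_right _ _
  exact ⟨(Nat.mul_le_mul_right _ hN).trans (hL g hmem),
    (Nat.mul_le_mul_right _ hN).trans (hR g hmem)⟩

theorem length_mul_card_symmDiff_le_of_stageCheck {hist : List (List Γ)} {l : List Γ}
    (h : stageCheck hist l = true) {y : Γ} (hy : y ∈ hist.flatten) :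
    hist.flatten.length * #(l.toFinset ∆ l.toFinset.image (y * ·)) ≤ #l.toFinset := by
  obtain ⟨-, hL, -⟩ := stageCheck_eq_true_iff.1 h
  have hmem : y ∈ (stageElems hist).toFinset := by simp [stageElems, hy]
  have hN : hist.flatten.length ≤ stageBound hist := Nat.le_add_left _ _
  exact (Nat.mul_le_mul_right _ hN).trans (hL y hmem)

theorem toFinset_nonempty_of_stageCheck {hist : List (List Γ)} {l : List Γ}
    (h : stageCheck hist l = true) : l.toFinset.Nonempty :=
  List.toFinset_nonempty_iff _ |>.2 (stageCheck_eq_true_iff.1 h).1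

variable {L : ℕ → List Γ} (hL : ∀ n, stageCheck ((List.range n).map L) (L n) = true)
include hL

theorem isLeftFolner_of_stageCheck : IsLeftFolner fun n => (L n).toFinset :=
  ⟨fun n => toFinset_nonempty_of_stageCheck (hL n), fun g =>
    tendsto_div_of_succ_mul_le (fun n => (toFinset_nonempty_of_stageCheck (hL n)).card_pos) <|
      eventually_atTop.2 ⟨Encodable.encode g, fun n hn => by
        simpa using (succ_mul_card_symmDiff_le_of_stageCheck (hL n) (by simpa using hn)).1⟩⟩

theorem isRightFolner_of_stageCheck : IsRightFolner fun n => (L n).toFinset :=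
  ⟨fun n => toFinset_nonempty_of_stageCheck (hL n), fun g =>
    tendsto_div_of_succ_mul_le (fun n => (toFinset_nonempty_of_stageCheck (hL n)).card_pos) <|
      eventually_atTop.2 ⟨Encodable.encode g, fun n hn => by
        simpa using (succ_mul_card_symmDiff_le_of_stageCheck (hL n) (by simpa using hn)).2⟩⟩

theorem isTempered_of_stageCheck : IsTempered 2 fun n => (L n).toFinset := by
  refine isTempered_two fun j y hy => ?_
  have hE : (range j).biUnion (fun i => (L i).toFinset) =
      ((List.range j).map L).flatten.toFinset := by
    ext x
    simp
  rw [hE] at hy ⊢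
  exact (Nat.mul_le_mul_right _ (List.toFinset_card_le _)).trans
    (length_mul_card_symmDiff_le_of_stageCheck (hL j) (List.mem_toFinset.1 hy))

end Stages

/-- Every computable amenable group admits a canonically computable, tempered,
two-sided Følner sequence. -/
theorem exists_canonically_computable_tempered_two_sided_folner
    {Γ : Type*} [Group Γ] [DecidableEq Γ] [Primcodable Γ]
    (hmul : Computable fun p : Γ × Γ => p.1 * p.2)
    (hamen : ∃ F : ℕ → Finset Γ, IsLeftFolner F) :
    ∃ F : ℕ → Finset Γ, CanonicallyComputable F ∧ (∃ C : ℝ, IsTempered C F) ∧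
      IsLeftFolner F ∧ IsRightFolner F := by
  obtain ⟨F₀, hF₀⟩ := hamen
  obtain ⟨L, hL, hstage⟩ := exists_computable_stageCheck hmul
    (exists_isLeftInvariant_isRightInvariant hF₀.exists_isLeftInvariant)
  exact ⟨fun n => (L n).toFinset, ⟨L, hL, fun _ => rfl⟩,
    ⟨2, isTempered_of_stageCheck hstage⟩,
    isLeftFolner_of_stageCheck hstage, isRightFolner_of_stageCheck hstage⟩
end

section
/- Every left Følner sequence (F_n)_{n≥1} in a countable group Γ has a subsequence (F_{n_i})_{i≥1} that is a 2-tempered left Følner sequence, i.e., |⋃_{j<i} F_{n_j}⁻¹ · F_{n_i}| ≤ 2·|F_{n_i}| for every i. -/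
open Pointwise Filter

/-!
For a fixed finite `K`, every `g ∈ K` moves only a vanishing proportion of `F n`, and
`|K * F n| ≤ |F n| + ∑_{g ∈ K} |F n ∆ g F n|`, so eventually `|K * F n| ≤ 2 |F n|`. The
subsequence is then chosen greedily: `n_i` is any index beyond `n_{i-1}` that works for
`K = ⋃_{j < i} F_{n_j}⁻¹`. Being Følner passes to subsequences.
-/

open Finset

theorem Filter.extraction_forall_image_range_of_frequently {P : Finset ℕ → ℕ → Prop}
    (h : ∀ s, ∃ᶠ k in atTop, P s k) :
    ∃ φ : ℕ → ℕ, StrictMono φ ∧ ∀ n, P ((range n).image φ) (φ n) := by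
  simp only [frequently_atTop'] at h
  choose next hnext_gt hnext using h
  -- `pre n` will be `(range n).image φ`; picking `φ n` above `(pre n).sup id` makes `φ` increase.
  let pre : ℕ → Finset ℕ := fun n => Nat.rec ∅ (fun _ s => insert (next s (s.sup id)) s) n
  let φ n := next (pre n) ((pre n).sup id)
  have hpre_succ (n : ℕ) : pre (n + 1) = insert (φ n) (pre n) := rfl
  have hpre (n : ℕ) : pre n = (range n).image φ := by
    induction n with
    | zero => rfl
    | succ n ih => rw [hpre_succ, ih, range_add_one, image_insert]
  refine ⟨φ, strictMono_nat_of_lt_succ fun n => ?_, fun n => hpre n ▸ hnext _ _⟩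
  calc φ n ≤ (pre (n + 1)).sup id := le_sup (f := id) (hpre_succ n ▸ mem_insert_self _ _)
    _ < φ (n + 1) := hnext_gt _ _

theorem Finset.card_mul_le_card_add_sum_card_symmDiff {α : Type*} [Mul α] [DecidableEq α]
    (K F : Finset α) :
    (K * F).card ≤ F.card + ∑ g ∈ K, (symmDiff F (F.image (g * ·))).card := by
  have hsub : K * F ⊆ F ∪ K.biUnion fun g => symmDiff F (F.image (g * ·)) := by
    rintro _ hx
    obtain ⟨g, hg, y, hy, rfl⟩ := mem_mul.1 hx
    by_cases hgy : g * y ∈ F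
    · exact mem_union_left _ hgy
    · exact mem_union_right _ <| mem_biUnion.2
        ⟨g, hg, mem_symmDiff.2 <| Or.inr ⟨mem_image_of_mem _ hy, hgy⟩⟩
  calc (K * F).card ≤ (F ∪ K.biUnion fun g => symmDiff F (F.image (g * ·))).card :=
        card_le_card hsub
    _ ≤ F.card + (K.biUnion fun g => symmDiff F (F.image (g * ·))).card := card_union_le _ _
    _ ≤ _ := by gcongr; exact card_biUnion_le

theorem Finset.biUnion_mul {ι α : Type*} [Mul α] [DecidableEq α] (s : Finset ι)
    (t : ι → Finset α) (u : Finset α) : s.biUnion t * u = s.biUnion fun i => t i * u := by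
  ext
  simp only [mem_mul, mem_biUnion]
  aesop

namespace IsLeftFolner

variable {Γ : Type*} [Group Γ] [DecidableEq Γ] {F : ℕ → Finset Γ}

theorem comp_strictMono (hF : IsLeftFolner F) {φ : ℕ → ℕ} (hφ : StrictMono φ) :
    IsLeftFolner fun i => F (φ i) :=
  ⟨fun i => hF.1 (φ i), fun g => (hF.2 g).comp hφ.tendsto_atTop⟩

theorem eventually_card_symmDiff_le (hF : IsLeftFolner F) (g : Γ) {δ : ℝ} (hδ : 0 < δ) :
    ∀ᶠ n in atTop, ((symmDiff (F n) ((F n).image (g * ·))).card : ℝ) ≤ δ * (F n).card := by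
  filter_upwards [(hF.2 g).eventually (gt_mem_nhds hδ)] with n hn
  have hFn : (0 : ℝ) < (F n).card := by exact_mod_cast (hF.1 n).card_pos
  exact ((div_lt_iff₀ hFn).1 hn).le

theorem eventually_card_mul_le (hF : IsLeftFolner F) (K : Finset Γ) {C : ℝ} (hC : 1 < C) :
    ∀ᶠ n in atTop, ((K * F n).card : ℝ) ≤ C * (F n).card := by
  rcases K.eq_empty_or_nonempty with rfl | hK
  · exact Eventually.of_forall fun n => by
      simp only [empty_mul, card_empty, Nat.cast_zero]; positivity
  have hKc : (0 : ℝ) < K.card := by exact_mod_cast hK.card_pos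
  have hδ : 0 < (C - 1) / K.card := div_pos (by linarith) hKc
  filter_upwards [(eventually_all_finset K).2 fun g _ => hF.eventually_card_symmDiff_le g hδ]
    with n hn
  calc ((K * F n).card : ℝ)
      ≤ (F n).card + ∑ g ∈ K, ((symmDiff (F n) ((F n).image (g * ·))).card : ℝ) := by
        exact_mod_cast card_mul_le_card_add_sum_card_symmDiff K (F n)
    _ ≤ (F n).card + ∑ _g ∈ K, (C - 1) / K.card * (F n).card := by gcongr with g hg; exact hn g hg
    _ = C * (F n).card := by rw [sum_const, nsmul_eq_mul]; field_simp; ring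

end IsLeftFolner

theorem exists_tempered_subsequence_general {Γ : Type*} [Group Γ] [DecidableEq Γ]
    (F : ℕ → Finset Γ) (hF : IsLeftFolner F) :
    ∃ nseq : ℕ → ℕ, StrictMono nseq ∧ IsLeftFolner (fun i => F (nseq i)) ∧
      IsTempered 2 (fun i => F (nseq i)) := by
  obtain ⟨φ, hφ, hcard⟩ := extraction_forall_image_range_of_frequently fun s =>
    (hF.eventually_card_mul_le (s.biUnion fun i => (F i)⁻¹) one_lt_two).frequently
  refine ⟨φ, hφ, hF.comp_strictMono hφ, fun j => ?_⟩
  have := hcard j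
  rwa [image_biUnion, biUnion_mul] at this

/-- Every left Følner sequence in a countable group has a subsequence which is a
`2`-tempered left Følner sequence. -/
theorem exists_tempered_subsequence {Γ : Type*} [Group Γ] [DecidableEq Γ] [Countable Γ]
    (F : ℕ → Finset Γ) (hF : IsLeftFolner F) :
    ∃ nseq : ℕ → ℕ, StrictMono nseq ∧ IsLeftFolner (fun i => F (nseq i)) ∧
      IsTempered 2 (fun i => F (nseq i)) :=
  exists_tempered_subsequence_general F hF
end

section
/- Let Γ = ℤ and F_n = {−2^n, −2^n+1, …, 2^n} for n ≥ 1, and define f : ℤ → ℝ by f(m) = 2^k if m = 2^k + 1 for some integer k ≥ 0, and f(m) = 0 otherwise. Then limsup_{n→∞} (1/|F_n|) Σ_{g∈F_n} f(g) = 1/2 while limsup_{n→∞} (1/|F_n|) Σ_{g∈F_n} f(g+1) = 1; in particular the two limsups are not equal, so the limsup of Følner averages of an unbounded nonnegative function need not be translation invariant. -/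
/-!
Only the points `2^k + 1` carry mass, so the sum of `f` over a set containing exactly the spikes
with `k < N` is the geometric sum `2^0 + ⋯ + 2^(N-1) = 2^N - 1`. On `F n = [-2^n, 2^n]` this gives `N = n`, while the translate sees `[-2^n + 1, 2^n + 1]`, which
also contains the spike at `2^n + 1`, so `N = n + 1`. Dividing by `|F n| = 2^(n+1) + 1`, the
averages tend to `1/2` and `1`.
-/

open Filter Finset Topology

lemma tendsto_affine_div_affine_of_tendsto_atTop {α : Type*} {l : Filter α} {x : α → ℝ}
    (hx : Tendsto x l atTop) (a b c d : ℝ) (hc : c ≠ 0) :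
    Tendsto (fun i => (a * x i + b) / (c * x i + d)) l (𝓝 (a / c)) := by
  have hlim : Tendsto (fun i => (a + b / x i) / (c + d / x i)) l (𝓝 ((a + 0) / (c + 0))) :=
    (tendsto_const_nhds.add (hx.const_div_atTop b)).div
      (tendsto_const_nhds.add (hx.const_div_atTop d)) (by simpa using hc)
  rw [add_zero, add_zero] at hlim
  refine hlim.congr' ?_
  filter_upwards [hx.eventually_gt_atTop 0] with i hi
  rw [← mul_div_mul_right _ _ hi.ne']
  field_simp

lemma card_Icc_neg_self (m : ℤ) (hm : 0 ≤ m) : ((Icc (-m) m).card : ℝ) = 2 * m + 1 := by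
  have h := Int.card_Icc_of_le (a := -m) (b := m) (by omega)
  rw [← Int.cast_natCast, h]
  push_cast
  ring

lemma two_pow_add_one_mem_Icc_iff (n k : ℕ) :
    (2 : ℤ) ^ k + 1 ∈ Icc (-2 ^ n) (2 ^ n) ↔ k < n := by
  rw [mem_Icc, ← pow_lt_pow_iff_right₀ (one_lt_two (α := ℤ))]
  have := pow_pos (two_pos (α := ℤ)) k
  omega

lemma two_pow_add_one_mem_Icc_add_one_iff (n k : ℕ) :
    (2 : ℤ) ^ k + 1 ∈ Icc (-2 ^ n + 1) (2 ^ n + 1) ↔ k < n + 1 := by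
  rw [mem_Icc, Nat.lt_succ_iff, ← pow_le_pow_iff_right₀ (one_lt_two (α := ℤ))]
  have := pow_pos (two_pos (α := ℤ)) k
  omega

section

variable (f : ℤ → ℝ) (hf1 : ∀ k : ℕ, f (2 ^ k + 1) = 2 ^ k)
  (hf0 : ∀ m : ℤ, (∀ k : ℕ, m ≠ 2 ^ k + 1) → f m = 0)
include hf1 hf0

lemma sum_eq_two_pow_sub_one (s : Finset ℤ) (N : ℕ) (hs : ∀ k : ℕ, 2 ^ k + 1 ∈ s ↔ k < N) :
    ∑ m ∈ s, f m = 2 ^ N - 1 := by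
  have hinj : Set.InjOn (fun k : ℕ => (2 : ℤ) ^ k + 1) (range N) := fun a _ b _ hab =>
    Nat.pow_right_injective le_rfl (by simpa using hab)
  have hsub : (range N).image (fun k : ℕ => (2 : ℤ) ^ k + 1) ⊆ s := by
    simp [subset_iff, hs]
  rw [← sum_subset hsub, sum_image hinj]
  · simp only [hf1]
    rw [geom_sum_eq (by norm_num)]
    norm_num
  · intro m hm hm_not
    refine hf0 m fun k hk => hm_not ?_
    subst hk
    exact mem_image_of_mem _ (mem_range.2 ((hs k).1 hm))

end

/-- For `Γ = ℤ`, `F n = [-2^n, 2^n]` and the unbounded nonnegative function `f` with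
`f (2^k + 1) = 2^k` for `k ≥ 0` and `f = 0` elsewhere, the limsup of the Følner averages
of `f` equals `1/2`, the limsup of the averages of the translate `g ↦ f (g + 1)` equals `1`;
in particular the two limsups differ, so limsup of Følner averages of an unbounded
nonnegative function need not be translation invariant. -/
theorem limsup_avg_not_translation_invariant
    (f : ℤ → ℝ)
    (hf1 : ∀ k : ℕ, f (2 ^ k + 1) = 2 ^ k)
    (hf0 : ∀ m : ℤ, (∀ k : ℕ, m ≠ 2 ^ k + 1) → f m = 0)
    (F : ℕ → Finset ℤ) (hF : ∀ n, F n = Finset.Icc (-(2 ^ n) : ℤ) (2 ^ n)) :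
    limsup (fun n => (∑ g ∈ F n, f g) / (F n).card) atTop = 1 / 2 ∧
    limsup (fun n => (∑ g ∈ F n, f (g + 1)) / (F n).card) atTop = 1 ∧
    limsup (fun n => (∑ g ∈ F n, f g) / (F n).card) atTop ≠
      limsup (fun n => (∑ g ∈ F n, f (g + 1)) / (F n).card) atTop := by
  have hcard (n : ℕ) : ((F n).card : ℝ) = 2 * 2 ^ n + 1 := by
    rw [hF, card_Icc_neg_self _ (by positivity)]
    push_cast
    ring
  have hsum (n : ℕ) : ∑ g ∈ F n, f g = 1 * 2 ^ n + -1 := by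
    rw [hF, sum_eq_two_pow_sub_one f hf1 hf0 _ n (two_pow_add_one_mem_Icc_iff n)]
    ring
  have hsum_shift (n : ℕ) : ∑ g ∈ F n, f (g + 1) = 2 * 2 ^ n + -1 := by
    calc ∑ g ∈ F n, f (g + 1) = ∑ m ∈ Icc (-2 ^ n + 1) (2 ^ n + 1), f m := by
          rw [hF, ← map_add_right_Icc, sum_map]
          rfl
      _ = 2 ^ (n + 1) - 1 :=
          sum_eq_two_pow_sub_one f hf1 hf0 _ _ (two_pow_add_one_mem_Icc_add_one_iff n)
      _ = 2 * 2 ^ n + -1 := by ring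
  have hpow := tendsto_pow_atTop_atTop_of_one_lt (one_lt_two (α := ℝ))
  have havg : Tendsto (fun n => (∑ g ∈ F n, f g) / (F n).card) atTop (𝓝 (1 / 2)) := by
    simpa only [hsum, hcard] using
      tendsto_affine_div_affine_of_tendsto_atTop hpow 1 (-1) 2 1 two_ne_zero
  have havg_shift :
      Tendsto (fun n => (∑ g ∈ F n, f (g + 1)) / (F n).card) atTop (𝓝 (2 / 2)) := by
    simpa only [hsum_shift, hcard] using
      tendsto_affine_div_affine_of_tendsto_atTop hpow 2 (-1) 2 1 two_ne_zero
  rw [havg.limsup_eq, havg_shift.limsup_eq]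
  norm_num
end

section
/- Let Γ be a countable group acting by measure-preserving transformations on a probability space (X, μ), let F ⊆ Γ be a nonempty finite subset, and let I, U ⊆ X be measurable sets. Then μ(I ∩ ⋂_{g∈F} g⁻¹U) ≤ μ(I)·μ(U) + ‖(1/|F|) Σ_{g∈F} 1_{gI} − μ(I)‖_{L²(μ)}, where 1_{gI} denotes the indicator function of the set gI = {g·x : x ∈ I} and g⁻¹U = {x : g·x ∈ U}. -/
/-!
Each `g ∈ F` carries `I ∩ g⁻¹U` measure-preservingly into `gI ∩ U`, so `μ(I ∩ ⋂_{g∈F} g⁻¹U)` is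
at most the average of the `μ(gI ∩ U)`, which is `∫_U h` for `h = (1/|F|) Σ_{g∈F} 1_{gI}`.
Splitting `h ≤ μ(I) + |h - μ(I)|` bounds this by `μ(I)μ(U) + ‖h - μ(I)‖₁`, and `‖·‖₁ ≤ ‖·‖₂`
on a probability space.
-/

open MeasureTheory

theorem ENNReal.le_sum_div_card {ι : Type*} {s : Finset ι} (hs : s.Nonempty) {a : ENNReal}
    {b : ι → ENNReal} (h : ∀ i ∈ s, a ≤ b i) : a ≤ (∑ i ∈ s, b i) / s.card := by
  rw [ENNReal.le_div_iff_mul_le (Or.inl (by simpa using hs.ne_empty))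
    (Or.inl (ENNReal.natCast_ne_top _)), mul_comm, ← nsmul_eq_mul]
  exact s.card_nsmul_le_sum _ _ h

theorem ofReal_indicator_one_div_card {ι X : Type*} {s : Finset ι} {i : ι} (hi : i ∈ s)
    (A : Set X) (x : X) :
    ENNReal.ofReal (A.indicator (fun _ => (1 : ℝ)) x / s.card) =
      A.indicator (fun _ => (s.card : ENNReal)⁻¹) x := by
  have hcard : (0 : ℝ) < s.card := by exact_mod_cast Finset.card_pos.2 ⟨i, hi⟩
  by_cases hx : x ∈ A
  · simp [hx, ENNReal.ofReal_inv_of_pos hcard]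
  · simp [hx]

section SetLIntegral

variable {X : Type*} [MeasurableSpace X] {μ : Measure X}

theorem setLIntegral_ofReal_sum_indicator_div_card {ι : Type*} (s : Finset ι)
    {A : ι → Set X} (hA : ∀ i ∈ s, MeasurableSet (A i)) (U : Set X) :
    ∫⁻ x in U, ENNReal.ofReal ((∑ i ∈ s, (A i).indicator (fun _ => (1 : ℝ)) x) / s.card) ∂μ =
      (∑ i ∈ s, μ (A i ∩ U)) / s.card := by
  have hpoint : ∀ x, ENNReal.ofReal ((∑ i ∈ s, (A i).indicator (fun _ => (1 : ℝ)) x) / s.card) =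
      ∑ i ∈ s, (A i).indicator (fun _ => (s.card : ENNReal)⁻¹) x := fun x => by
    rw [Finset.sum_div, ENNReal.ofReal_sum_of_nonneg fun i _ =>
      div_nonneg (Set.indicator_nonneg (fun _ _ => zero_le_one) x) s.card.cast_nonneg]
    exact Finset.sum_congr rfl fun i hi => ofReal_indicator_one_div_card hi _ _
  simp_rw [hpoint]
  rw [lintegral_finsetSum _ fun i hi => measurable_const.indicator (hA i hi),
    ENNReal.div_eq_inv_mul, Finset.mul_sum]
  refine Finset.sum_congr rfl fun i hi => ?_
  rw [lintegral_indicator_const (hA i hi), Measure.restrict_apply (hA i hi)]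

theorem setLIntegral_ofReal_le_mul_add_eLpNorm_sub (f : X → ℝ) (c : ℝ) (U : Set X) :
    ∫⁻ x in U, ENNReal.ofReal (f x) ∂μ ≤
      ENNReal.ofReal c * μ U + eLpNorm (fun x => f x - c) 1 μ := by
  calc ∫⁻ x in U, ENNReal.ofReal (f x) ∂μ
      ≤ ∫⁻ x in U, (ENNReal.ofReal c + ‖f x - c‖ₑ) ∂μ := by
        refine lintegral_mono fun x => ?_
        rw [Real.enorm_eq_ofReal_abs]
        exact (ENNReal.ofReal_le_ofReal (by linarith [le_abs_self (f x - c)])).trans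
          ENNReal.ofReal_add_le
    _ = ENNReal.ofReal c * μ U + ∫⁻ x in U, ‖f x - c‖ₑ ∂μ := by
        rw [lintegral_add_left measurable_const, setLIntegral_const]
    _ ≤ ENNReal.ofReal c * μ U + eLpNorm (fun x => f x - c) 1 μ := by
        rw [eLpNorm_one_eq_lintegral_enorm]
        exact add_le_add_right (setLIntegral_le_lintegral _ _) _

end SetLIntegral

theorem MeasureTheory.MeasurePreserving.measure_inter_preimage_smul {Γ X : Type*} [Group Γ]
    [MulAction Γ X] [MeasurableSpace X] [MeasurableConstSMul Γ X] {μ : Measure X} {g : Γ}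
    (hg : MeasurePreserving (fun x => g • x) μ μ) (I U : Set X) :
    μ (I ∩ (fun x => g • x) ⁻¹' U) = μ ((fun y => g⁻¹ • y) ⁻¹' I ∩ U) := by
  have hpre : (fun x => g • x) ⁻¹' ((fun y => g⁻¹ • y) ⁻¹' I ∩ U) =
      I ∩ (fun x => g • x) ⁻¹' U := by
    ext x
    simp
  rw [← hpre, hg.measure_preimage_emb (measurableEmbedding_const_smul g)]

theorem measure_inter_iInter_le_general
    {Γ : Type*} [Group Γ]
    {X : Type*} [MeasurableSpace X] (μ : Measure X) [IsProbabilityMeasure μ]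
    [MulAction Γ X]
    (hmp : ∀ g : Γ, MeasurePreserving (fun x => g • x) μ μ)
    (F : Finset Γ) (hF : F.Nonempty)
    (I U : Set X) (hI : MeasurableSet I) :
    μ (I ∩ ⋂ g ∈ F, (fun x => g • x) ⁻¹' U) ≤
      μ I * μ U +
        eLpNorm (fun x =>
          (∑ g ∈ F, Set.indicator ((fun y => g⁻¹ • y) ⁻¹' I) (fun _ => (1 : ℝ)) x) / F.card
            - (μ I).toReal) 2 μ := by
  have : MeasurableConstSMul Γ X := ⟨fun g => (hmp g).measurable⟩
  have hgI : ∀ g : Γ, MeasurableSet ((fun y => g⁻¹ • y) ⁻¹' I) :=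
    fun g => measurable_const_smul g⁻¹ hI
  set h : X → ℝ := fun x =>
    (∑ g ∈ F, Set.indicator ((fun y => g⁻¹ • y) ⁻¹' I) (fun _ => (1 : ℝ)) x) / F.card
  have hh : Measurable h :=
    (Finset.measurable_sum _ fun g _ => measurable_const.indicator (hgI g)).div_const _
  calc μ (I ∩ ⋂ g ∈ F, (fun x => g • x) ⁻¹' U)
      ≤ (∑ g ∈ F, μ ((fun y => g⁻¹ • y) ⁻¹' I ∩ U)) / F.card :=
        ENNReal.le_sum_div_card hF fun g hg =>
          (measure_mono (Set.inter_subset_inter_right _ (Set.biInter_subset_of_mem hg))).trans_eq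
            ((hmp g).measure_inter_preimage_smul I U)
    _ = ∫⁻ x in U, ENNReal.ofReal (h x) ∂μ :=
        (setLIntegral_ofReal_sum_indicator_div_card F (fun g _ => hgI g) U).symm
    _ ≤ μ I * μ U + eLpNorm (fun x => h x - (μ I).toReal) 1 μ := by
        simpa only [ENNReal.ofReal_toReal (measure_ne_top μ I)] using
          setLIntegral_ofReal_le_mul_add_eLpNorm_sub h (μ I).toReal U
    _ ≤ μ I * μ U + eLpNorm (fun x => h x - (μ I).toReal) 2 μ :=
        add_le_add_right (eLpNorm_le_eLpNorm_of_exponent_le one_le_two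
          (hh.sub_const _).aestronglyMeasurable) _

/-- Let a countable group `Γ` act by measure-preserving transformations on a probability
space `(X, μ)`, let `F ⊆ Γ` be a nonempty finite subset and `I, U ⊆ X` measurable sets.
Then `μ(I ∩ ⋂_{g∈F} g⁻¹U) ≤ μ(I)·μ(U) + ‖(1/|F|) Σ_{g∈F} 1_{gI} − μ(I)‖_{L²(μ)}`. -/
theorem measure_inter_iInter_le
    {Γ : Type*} [Group Γ] [Countable Γ]
    {X : Type*} [MeasurableSpace X] (μ : Measure X) [IsProbabilityMeasure μ]
    [MulAction Γ X]
    (hmp : ∀ g : Γ, MeasurePreserving (fun x => g • x) μ μ)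
    (F : Finset Γ) (hF : F.Nonempty)
    (I U : Set X) (hI : MeasurableSet I) (hU : MeasurableSet U) :
    μ (I ∩ ⋂ g ∈ F, (fun x => g • x) ⁻¹' U) ≤
      μ I * μ U +
        eLpNorm (fun x =>
          (∑ g ∈ F, Set.indicator ((fun y => g⁻¹ • y) ⁻¹' I) (fun _ => (1 : ℝ)) x) / F.card
            - (μ I).toReal) 2 μ :=
  measure_inter_iInter_le_general μ hmp F hF I U hI
end
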